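/- arXiv:1305.0241 — 5 statements merged into one kernel-verified Lean document; each statement's English description precedes it below -/
import Mathlib

section
/- For any b > 0 and m ≥ 1, the limit as n → ∞ of n^{-m} times the integral of ∏_{i=1}^m (1 - e^{-b u_i})/u_i over the simplex region { u ∈ (0,∞)^m : ∑ u_i < e^{nt} } equals t^m, for every t > 0. -/
/-!
The integrand is a product, so on a cube `(0, R]^m` the integral factorises into
`(∫₀^R h)^m`; the simplex `{u > 0, ∑ uᵢ < R}` lies between the cubes of sides `R / (m + 1)` and `R`.
Since `0 ≤ h ≤ b` near `0` and `h(u) = 1/u - e^{-bu}/u` with `∫₁^∞ e^{-bu} ≤ 1/b`, the integral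
`∫₀^R h` is `log R + O(1)`. For `R = e^{nt}/c` this is `nt + O(1)`, so both cube bounds, divided by
`n^m`, tend to `t^m`.
-/

open MeasureTheory Filter Set Real Topology

section Simplex

variable {ι : Type*} [Fintype ι]

def openSimplex (ι : Type*) [Fintype ι] (R : ℝ) : Set (ι → ℝ) :=
  {u | (∀ i, 0 < u i) ∧ ∑ i, u i < R}

lemma measurableSet_openSimplex (R : ℝ) : MeasurableSet (openSimplex ι R) := by
  simp only [openSimplex, ofPred_and, ofPred_forall]
  exact (MeasurableSet.iInter fun i => measurableSet_lt measurable_const (measurable_pi_apply i))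
    |>.inter (measurableSet_lt (by fun_prop) measurable_const)

lemma openSimplex_subset_pi_Ioc (R : ℝ) : openSimplex ι R ⊆ univ.pi fun _ => Ioc 0 R :=
  fun _ ⟨hpos, hsum⟩ i _ =>
    ⟨hpos i, (Finset.single_le_sum (fun j _ => (hpos j).le) (Finset.mem_univ i)).trans hsum.le⟩

lemma pi_Ioc_subset_openSimplex {R : ℝ} (hR : 0 < R) :
    (univ.pi fun _ => Ioc 0 (R / (Fintype.card ι + 1))) ⊆ openSimplex ι R := by
  intro u hu
  refine ⟨fun i => (hu i (mem_univ i)).1, ?_⟩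
  calc ∑ i, u i ≤ ∑ _i : ι, R / (Fintype.card ι + 1) :=
        Finset.sum_le_sum fun i _ => (hu i (mem_univ i)).2
    _ = R * (Fintype.card ι / (Fintype.card ι + 1)) := by
        rw [Finset.sum_const, Finset.card_univ, nsmul_eq_mul, mul_div_assoc', mul_comm,
          mul_div_assoc]
    _ < R := mul_lt_of_lt_one_right hR ((div_lt_one (by positivity)).2 (lt_add_one _))

lemma setIntegral_pi_prod (f : ℝ → ℝ) (s : Set ℝ) :
    ∫ u in univ.pi (fun _ : ι => s), ∏ i, f (u i) = (∫ x in s, f x) ^ Fintype.card ι := by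
  rw [volume_pi, Measure.restrict_pi_pi, integral_fintype_prod_eq_pow]

lemma integrableOn_pi_prod {f : ℝ → ℝ} {s : Set ℝ} (hf : IntegrableOn f s) :
    IntegrableOn (fun u : ι → ℝ => ∏ i, f (u i)) (univ.pi fun _ => s) := by
  rw [IntegrableOn, volume_pi, Measure.restrict_pi_pi]
  exact Integrable.fintype_prod fun _ => hf

variable {f : ℝ → ℝ} {R : ℝ}

lemma prod_nonneg_of_mem_pi_Ioc (hf : ∀ x, 0 < x → 0 ≤ f x) {u : ι → ℝ}
    (hu : u ∈ univ.pi fun _ => Ioc 0 R) : 0 ≤ ∏ i, f (u i) :=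
  Finset.prod_nonneg fun i _ => hf _ (hu i (mem_univ i)).1

lemma setIntegral_openSimplex_le (hf : ∀ x, 0 < x → 0 ≤ f x) (hfi : IntegrableOn f (Ioc 0 R)) :
    ∫ u in openSimplex ι R, ∏ i, f (u i) ≤ (∫ x in Ioc 0 R, f x) ^ Fintype.card ι := by
  rw [← setIntegral_pi_prod]
  exact setIntegral_mono_set (integrableOn_pi_prod hfi)
    (ae_restrict_of_forall_mem (MeasurableSet.univ_pi fun _ => measurableSet_Ioc)
      fun _ => prod_nonneg_of_mem_pi_Ioc hf)
    (openSimplex_subset_pi_Ioc R).eventuallyLE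

lemma le_setIntegral_openSimplex (hf : ∀ x, 0 < x → 0 ≤ f x) (hfi : IntegrableOn f (Ioc 0 R))
    (hR : 0 < R) :
    (∫ x in Ioc 0 (R / (Fintype.card ι + 1)), f x) ^ Fintype.card ι ≤
      ∫ u in openSimplex ι R, ∏ i, f (u i) := by
  rw [← setIntegral_pi_prod]
  exact setIntegral_mono_set ((integrableOn_pi_prod hfi).mono_set (openSimplex_subset_pi_Ioc R))
    (ae_restrict_of_forall_mem (measurableSet_openSimplex R)
      fun u hu => prod_nonneg_of_mem_pi_Ioc hf (openSimplex_subset_pi_Ioc R hu))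
    (pi_Ioc_subset_openSimplex hR).eventuallyLE

end Simplex

section DampedInv

variable {b : ℝ}

noncomputable def dampedInv (b x : ℝ) : ℝ := (1 - exp (-b * x)) / x

lemma dampedInv_nonneg (hb : 0 < b) {x : ℝ} (hx : 0 < x) : 0 ≤ dampedInv b x :=
  div_nonneg (sub_nonneg.2 (exp_le_one_iff.2 (by nlinarith))) hx.le

lemma dampedInv_le_const {x : ℝ} (hx : 0 < x) : dampedInv b x ≤ b := by
  rw [dampedInv, div_le_iff₀ hx]
  linarith [add_one_le_exp (-b * x)]

lemma dampedInv_le_inv {x : ℝ} (hx : 0 < x) : dampedInv b x ≤ x⁻¹ := by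
  rw [dampedInv, div_le_iff₀ hx, inv_mul_cancel₀ hx.ne']
  linarith [exp_pos (-b * x)]

lemma inv_sub_exp_le_dampedInv {x : ℝ} (hx : 1 ≤ x) : x⁻¹ - exp (-b * x) ≤ dampedInv b x := by
  rw [dampedInv, sub_div, one_div]
  gcongr
  exact div_le_self (exp_pos _).le hx

lemma continuousOn_dampedInv : ContinuousOn (dampedInv b) {0}ᶜ :=
  ((continuous_const.sub (continuous_exp.comp (continuous_const_mul (-b)))).continuousOn).div
    continuousOn_id fun _ hx => hx

lemma integrableOn_dampedInv_Ioc (hb : 0 < b) (R : ℝ) : IntegrableOn (dampedInv b) (Ioc 0 R) :=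
  Measure.integrableOn_of_bounded (M := b) measure_Ioc_lt_top.ne
    (Measurable.aestronglyMeasurable (by unfold dampedInv; fun_prop))
    ((ae_restrict_of_forall_mem measurableSet_Ioc) fun x hx => by
      rw [Real.norm_of_nonneg (dampedInv_nonneg hb hx.1)]
      exact dampedInv_le_const hx.1)

lemma intervalIntegrable_dampedInv {R : ℝ} (hR : 1 ≤ R) :
    IntervalIntegrable (dampedInv b) volume 1 R :=
  (continuousOn_dampedInv.mono fun x hx => by
    rw [uIcc_of_le hR] at hx
    exact (zero_lt_one.trans_le hx.1).ne').intervalIntegrable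

lemma integral_exp_neg_mul_le (hb : 0 < b) {a : ℝ} (ha : 0 ≤ a) (R : ℝ) :
    ∫ x in a..R, exp (-b * x) ≤ b⁻¹ := by
  rw [intervalIntegral.integral_comp_mul_left (fun x => exp x) (neg_ne_zero.2 hb.ne'),
    integral_exp, smul_eq_mul, inv_neg, neg_mul, ← mul_neg, neg_sub]
  exact mul_le_of_le_one_right (inv_pos.2 hb).le
    (by linarith [exp_pos (-b * R), exp_le_one_iff.2 (by nlinarith : -b * a ≤ 0)])

lemma integral_dampedInv_le_log {R : ℝ} (hR : 1 ≤ R) : ∫ x in 1..R, dampedInv b x ≤ log R := by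
  calc ∫ x in 1..R, dampedInv b x ≤ ∫ x in 1..R, x⁻¹ :=
        intervalIntegral.integral_mono_on hR (intervalIntegrable_dampedInv hR)
          (intervalIntegral.intervalIntegrable_inv (fun x hx => by
            rw [uIcc_of_le hR] at hx; linarith [hx.1]) continuousOn_id)
          fun x hx => dampedInv_le_inv (zero_lt_one.trans_le hx.1)
    _ = log R := by rw [integral_inv_of_pos one_pos (by linarith), div_one]

lemma log_sub_inv_le_integral_dampedInv (hb : 0 < b) {R : ℝ} (hR : 1 ≤ R) :
    log R - b⁻¹ ≤ ∫ x in 1..R, dampedInv b x := by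
  have hinv : IntervalIntegrable (fun x : ℝ => x⁻¹) volume 1 R :=
    intervalIntegral.intervalIntegrable_inv (fun x hx => by
      rw [uIcc_of_le hR] at hx; linarith [hx.1]) continuousOn_id
  have hexp : IntervalIntegrable (fun x => exp (-b * x)) volume 1 R :=
    (by fun_prop : Continuous fun x => exp (-b * x)).intervalIntegrable _ _
  calc log R - b⁻¹ ≤ ∫ x in 1..R, (x⁻¹ - exp (-b * x)) := by
        rw [intervalIntegral.integral_sub hinv hexp, integral_inv_of_pos one_pos (by linarith),
          div_one]
        linarith [integral_exp_neg_mul_le hb zero_le_one R]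
    _ ≤ ∫ x in 1..R, dampedInv b x :=
        intervalIntegral.integral_mono_on hR (hinv.sub hexp) (intervalIntegrable_dampedInv hR)
          fun x hx => inv_sub_exp_le_dampedInv hx.1

end DampedInv

lemma tendsto_div_natCast_of_abs_sub_le {f : ℕ → ℝ} {t C : ℝ}
    (h : ∀ᶠ n in atTop, |f n - n * t| ≤ C) : Tendsto (fun n => f n / n) atTop (𝓝 t) := by
  have hrem : Tendsto (fun n : ℕ => (f n - n * t) / n) atTop (𝓝 0) := by
    refine squeeze_zero_norm' ?_ (tendsto_const_div_atTop_nhds_zero_nat C)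
    filter_upwards [h] with n hn
    rw [Real.norm_eq_abs, abs_div, Nat.abs_cast]
    exact div_le_div_of_nonneg_right hn n.cast_nonneg
  have hsum : Tendsto (fun n : ℕ => t + (f n - n * t) / n) atTop (𝓝 t) := by
    simpa using hrem.const_add t
  refine hsum.congr' ?_
  filter_upwards [eventually_ne_atTop 0] with n hn
  field_simp
  ring

lemma tendsto_integral_dampedInv_exp_div {b t c : ℝ} (hb : 0 < b) (ht : 0 < t) (hc : 0 < c) :
    Tendsto (fun n : ℕ => (∫ x in Ioc 0 (exp (n * t) / c), dampedInv b x) / n) atTop (𝓝 t) := by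
  obtain ⟨I₁, hI₁⟩ : ∃ I, ∫ x in Ioc 0 1, dampedInv b x = I := ⟨_, rfl⟩
  refine tendsto_div_natCast_of_abs_sub_le (C := |I₁| + b⁻¹ + |log c|) ?_
  have hR : Tendsto (fun n : ℕ => exp (n * t) / c) atTop atTop :=
    (tendsto_exp_atTop.comp (tendsto_natCast_atTop_atTop.atTop_mul_const ht)).atTop_div_const hc
  filter_upwards [hR.eventually_ge_atTop 1] with n hn
  set R := exp (n * t) / c
  have hlog : log R = n * t - log c := by rw [log_div (exp_ne_zero _) hc.ne', log_exp]
  have hsplit : ∫ x in Ioc 0 R, dampedInv b x = I₁ + ∫ x in 1..R, dampedInv b x := by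
    rw [← hI₁, ← intervalIntegral.integral_of_le (zero_le_one.trans hn),
      ← intervalIntegral.integral_of_le zero_le_one,
      intervalIntegral.integral_add_adjacent_intervals
        ((intervalIntegrable_iff_integrableOn_Ioc_of_le zero_le_one).2
          (integrableOn_dampedInv_Ioc hb 1))
        (intervalIntegrable_dampedInv hn)]
  have hupper := integral_dampedInv_le_log (b := b) hn
  have hlower := log_sub_inv_le_integral_dampedInv hb hn
  rw [hsplit, abs_le]
  constructor <;> linarith [le_abs_self I₁, neg_abs_le I₁, le_abs_self (log c), neg_abs_le (log c)]

theorem simplex_integral_limit_general (b t : ℝ) (hb : 0 < b) (ht : 0 < t) (m : ℕ) :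
    Tendsto (fun n : ℕ =>
        (n : ℝ) ^ (-(m : ℤ)) *
          ∫ u in {u : Fin m → ℝ | (∀ i, 0 < u i) ∧ ∑ i, u i < Real.exp (n * t)},
            ∏ i, (1 - Real.exp (-b * u i)) / u i)
      atTop (nhds (t ^ m)) := by
  have hf (x : ℝ) : 0 < x → 0 ≤ dampedInv b x := dampedInv_nonneg hb
  have hlim (c : ℝ) (hc : 0 < c) : Tendsto (fun n : ℕ =>
      ((∫ x in Ioc 0 (exp (n * t) / c), dampedInv b x) / n) ^ m) atTop (𝓝 (t ^ m)) :=
    (tendsto_integral_dampedInv_exp_div hb ht hc).pow m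
  have hscale (n : ℕ) (y : ℝ) : (y / n) ^ m = (n : ℝ) ^ (-(m : ℤ)) * y ^ m := by
    rw [div_pow, zpow_neg, zpow_natCast, inv_mul_eq_div]
  refine tendsto_of_tendsto_of_tendsto_of_le_of_le (hlim (m + 1) (by positivity))
    (by simpa using hlim 1 one_pos) (fun n => ?_) (fun n => ?_) <;> rw [hscale] <;> gcongr
  · simpa only [Fintype.card_fin, openSimplex, dampedInv] using
      le_setIntegral_openSimplex (ι := Fin m) hf (integrableOn_dampedInv_Ioc hb _) (exp_pos (n * t))
  · simpa only [Fintype.card_fin, openSimplex, dampedInv] using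
      setIntegral_openSimplex_le (ι := Fin m) hf (integrableOn_dampedInv_Ioc hb (exp (n * t)))

/-- `n^{-m}` times the integral of `∏ (1 - e^{-b uᵢ})/uᵢ` over the simplex
`{u ∈ (0,∞)^m : ∑ uᵢ < e^{nt}}` tends to `t^m`. -/
theorem simplex_integral_limit (b t : ℝ) (hb : 0 < b) (ht : 0 < t) (m : ℕ) (hm : 1 ≤ m) :
    Tendsto (fun n : ℕ =>
        (n : ℝ) ^ (-(m : ℤ)) *
          ∫ u in {u : Fin m → ℝ | (∀ i, 0 < u i) ∧ ∑ i, u i < Real.exp (n * t)},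
            ∏ i, (1 - Real.exp (-b * u i)) / u i)
      atTop (nhds (t ^ m)) :=
  simplex_integral_limit_general b t hb ht m
end

section
/- For any b > 0 and m ≥ 1, the integral of ∏_{i=1}^m (1 - e^{-b u_i})/u_i over the set { u ∈ [0, e^{nt}]^m : u_j > e^{nt}/m for some j } is bounded by a constant (independent of n) times n^{m-1}. -/
/-! On `[0, ∞)` the kernel `(1 - e^{-bu})/u` is dominated by `K = max b 1` on `[0, 1]` and by
`1/u` beyond. If some coordinate of `u ∈ [0, E]^m` exceeds `E/m`, then `u` lies in one of `m`
boxes in which that coordinate ranges over `(E/m, E]` and the others over `[0, E]`. By Fubini the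
majorant integrates over such a box to at most `K m · (K + log E)^{m-1}`, since it is at most
`K m / E` on `(E/m, E]` and has integral `K + log E` over `[0, E]`. For `E = e^{nt}` this is
`O(n^{m-1})`. -/

open MeasureTheory Real Set

section UnionBound

variable {α ι : Type*} [MeasurableSpace α] [Fintype ι] {μ : Measure α} {f : α → ℝ}

theorem setIntegral_le_sum_of_subset_iUnion {s : Set α} {t : ι → Set α}
    (hf : ∀ x, 0 ≤ f x) (hst : s ⊆ ⋃ i, t i) (hft : ∀ i, IntegrableOn f (t i) μ) :
    ∫ x in s, f x ∂μ ≤ ∑ i, ∫ x in t i, f x ∂μ := by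
  have hle : μ.restrict s ≤ Measure.sum fun i ↦ μ.restrict (t i) :=
    (Measure.restrict_mono hst le_rfl).trans Measure.restrict_iUnion_le
  have hint : Integrable f (Measure.sum fun i ↦ μ.restrict (t i)) := by
    rw [Measure.sum_fintype]
    exact integrable_finsetSum_measure.2 fun i _ ↦ hft i
  calc ∫ x in s, f x ∂μ ≤ ∫ x, f x ∂(Measure.sum fun i ↦ μ.restrict (t i)) :=
        integral_mono_measure hle (.of_forall hf) hint
    _ = ∑ i, ∫ x in t i, f x ∂μ := by
        rw [Measure.sum_fintype, integral_finsetSum_measure fun i _ ↦ hft i]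

end UnionBound

section Boxes

variable {ι 𝕜 : Type*} [Fintype ι] [RCLike 𝕜] {E : ι → Type*} [∀ i, MeasureSpace (E i)]
  [∀ i, SigmaFinite (volume : Measure (E i))] {f : (i : ι) → E i → 𝕜}

theorem integrableOn_univ_pi_prod {s : (i : ι) → Set (E i)}
    (hf : ∀ i, IntegrableOn (f i) (s i)) :
    IntegrableOn (fun x ↦ ∏ i, f i (x i)) (univ.pi s) := by
  rw [IntegrableOn, volume_pi, Measure.restrict_pi_pi]
  exact .fintype_prod_dep hf

theorem setIntegral_univ_pi_prod (s : (i : ι) → Set (E i)) :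
    ∫ x in univ.pi s, ∏ i, f i (x i) = ∏ i, ∫ x in s i, f i x := by
  rw [volume_pi, Measure.restrict_pi_pi]
  exact integral_fintype_prod_eq_prod f

end Boxes

noncomputable def cappedInv (K x : ℝ) : ℝ := if x ≤ 1 then K else x⁻¹

section CappedInv

variable {K : ℝ}

theorem cappedInv_of_le {x : ℝ} (hx : x ≤ 1) : cappedInv K x = K := if_pos hx

theorem cappedInv_of_one_lt {x : ℝ} (hx : 1 < x) : cappedInv K x = x⁻¹ := if_neg hx.not_ge

theorem measurable_cappedInv (K : ℝ) : Measurable (cappedInv K) :=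
  Measurable.ite measurableSet_Iic measurable_const measurable_inv

theorem cappedInv_nonneg (hK : 0 ≤ K) (x : ℝ) : 0 ≤ cappedInv K x := by
  unfold cappedInv
  split_ifs with hx
  · exact hK
  · exact inv_nonneg.2 (by linarith)

theorem cappedInv_le (hK : 1 ≤ K) (x : ℝ) : cappedInv K x ≤ K := by
  unfold cappedInv
  split_ifs with hx
  · exact le_rfl
  · exact (inv_le_one_of_one_le₀ (by linarith)).trans hK

theorem cappedInv_le_div (hK : 1 ≤ K) {a x : ℝ} (ha : 0 < a) (hax : a < x) :
    cappedInv K x ≤ K / a := by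
  unfold cappedInv
  split_ifs with hx
  · exact le_div_self (by linarith) ha (by linarith)
  · calc x⁻¹ ≤ a⁻¹ := inv_anti₀ ha hax.le
      _ ≤ K / a := by rw [inv_eq_one_div]; gcongr

theorem integrableOn_cappedInv (hK : 1 ≤ K) {s : Set ℝ} (hs : volume s ≠ ⊤) :
    IntegrableOn (cappedInv K) s :=
  Measure.integrableOn_of_bounded hs (measurable_cappedInv K).aestronglyMeasurable
    (.of_forall fun x ↦ by
      rw [norm_of_nonneg (cappedInv_nonneg (by linarith) x)]
      exact cappedInv_le hK x)

theorem integral_cappedInv_Icc (hK : 1 ≤ K) {E : ℝ} (hE : 1 ≤ E) :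
    ∫ x in Icc 0 E, cappedInv K x = K + log E := by
  have hdisj : Disjoint (Icc (0 : ℝ) 1) (Ioc 1 E) :=
    disjoint_left.2 fun x hx hx' ↦ hx'.1.not_ge hx.2
  rw [← Icc_union_Ioc_eq_Icc zero_le_one hE, setIntegral_union hdisj measurableSet_Ioc
    (integrableOn_cappedInv hK (by simp)) (integrableOn_cappedInv hK (by simp))]
  have hIcc : ∫ x in Icc (0 : ℝ) 1, cappedInv K x = K := by
    rw [setIntegral_congr_fun measurableSet_Icc fun x hx ↦ cappedInv_of_le hx.2,
      setIntegral_const]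
    simp
  have hIoc : ∫ x in Ioc 1 E, cappedInv K x = log E := by
    rw [setIntegral_congr_fun measurableSet_Ioc fun x hx ↦ cappedInv_of_one_lt hx.1,
      ← intervalIntegral.integral_of_le hE, integral_inv_of_pos one_pos (by linarith), div_one]
  rw [hIcc, hIoc]

theorem setIntegral_cappedInv_Ioc_le (hK : 1 ≤ K) {a E : ℝ} (ha : 0 < a) (haE : a ≤ E) :
    ∫ x in Ioc a E, cappedInv K x ≤ K * E / a := by
  have hbound : ∀ x ∈ Ioc a E, ‖cappedInv K x‖ ≤ K / a := fun x hx ↦ by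
    rw [norm_of_nonneg (cappedInv_nonneg (by linarith) x)]
    exact cappedInv_le_div hK ha hx.1
  calc ∫ x in Ioc a E, cappedInv K x
      ≤ ‖∫ x in Ioc a E, cappedInv K x‖ := le_norm_self _
    _ ≤ K / a * volume.real (Ioc a E) := norm_setIntegral_le_of_norm_le_const (by simp) hbound
    _ = K / a * (E - a) := by rw [volume_real_Ioc_of_le haE]
    _ ≤ K * E / a := by
        rw [div_mul_eq_mul_div]
        gcongr
        linarith

end CappedInv

theorem one_sub_exp_neg_mul_div_nonneg {b x : ℝ} (hb : 0 ≤ b) (hx : 0 ≤ x) :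
    0 ≤ (1 - exp (-b * x)) / x :=
  div_nonneg (sub_nonneg.2 (exp_le_one_iff.2 (by nlinarith))) hx

theorem one_sub_exp_neg_mul_div_le_cappedInv (b : ℝ) {x : ℝ} (hx : 0 ≤ x) :
    (1 - exp (-b * x)) / x ≤ cappedInv (max b 1) x := by
  unfold cappedInv
  split_ifs with hx1
  · rcases hx.eq_or_lt with rfl | hx0
    · simp
    · rw [div_le_iff₀ hx0]
      nlinarith [add_one_le_exp (-b * x), le_max_left b 1]
  · rw [← one_div]
    gcongr
    linarith [exp_pos (-b * x)]

theorem setIntegral_prod_one_sub_exp_neg_mul_div_le {ι : Type*} [Fintype ι] {b : ℝ}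
    (hb : 0 ≤ b) {s : Set (ι → ℝ)} (hs : MeasurableSet s) (hs_nonneg : ∀ u ∈ s, ∀ i, 0 ≤ u i)
    (hint : IntegrableOn (fun u ↦ ∏ i, cappedInv (max b 1) (u i)) s) :
    ∫ u in s, ∏ i, (1 - exp (-b * u i)) / u i ≤
      ∫ u in s, ∏ i, cappedInv (max b 1) (u i) := by
  refine integral_mono_of_nonneg (ae_restrict_of_forall_mem hs fun u hu ↦ ?_) hint
    (ae_restrict_of_forall_mem hs fun u hu ↦ ?_)
  · exact Finset.prod_nonneg fun i _ ↦ one_sub_exp_neg_mul_div_nonneg hb (hs_nonneg u hu i)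
  · exact Finset.prod_le_prod (fun i _ ↦ one_sub_exp_neg_mul_div_nonneg hb (hs_nonneg u hu i))
      fun i _ ↦ one_sub_exp_neg_mul_div_le_cappedInv b (hs_nonneg u hu i)

section Cube

variable {ι : Type*} [DecidableEq ι]

theorem subset_iUnion_pi_update_Ioc {a E : ℝ} :
    {u : ι → ℝ | (∀ i, u i ∈ Icc 0 E) ∧ ∃ j, a < u j} ⊆
      ⋃ j, univ.pi (Function.update (fun _ ↦ Icc 0 E) j (Ioc a E)) := by
  rintro u ⟨hu, j, hj⟩
  refine mem_iUnion.2 ⟨j, fun i _ ↦ ?_⟩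
  rcases eq_or_ne i j with rfl | hij
  · rw [Function.update_self]
    exact ⟨hj, (hu i).2⟩
  · rw [Function.update_of_ne hij]
    exact hu i

variable [Fintype ι] {K : ℝ}

theorem setIntegral_pi_update_prod_cappedInv_le (hK : 1 ≤ K) {a E : ℝ} (ha : 0 < a)
    (haE : a ≤ E) (hE : 1 ≤ E) (j : ι) :
    ∫ u in univ.pi (Function.update (fun _ ↦ Icc 0 E) j (Ioc a E)), ∏ i, cappedInv K (u i) ≤
      K * E / a * (K + log E) ^ (Fintype.card ι - 1) := by
  rw [setIntegral_univ_pi_prod, ← Finset.mul_prod_erase _ _ (Finset.mem_univ j),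
    Function.update_self]
  have hnonneg : ∀ s : Set ℝ, 0 ≤ ∫ x in s, cappedInv K x := fun s ↦
    integral_nonneg (cappedInv_nonneg (by linarith))
  have hrest : ∏ i ∈ Finset.univ.erase j,
      ∫ x in Function.update (fun _ ↦ Icc 0 E) j (Ioc a E) i, cappedInv K x ≤
        (K + log E) ^ (Fintype.card ι - 1) := by
    calc _ ≤ ∏ _i ∈ Finset.univ.erase j, (K + log E) :=
          Finset.prod_le_prod (fun i _ ↦ hnonneg _) fun i hi ↦ by
            rw [Function.update_of_ne (Finset.ne_of_mem_erase hi), integral_cappedInv_Icc hK hE]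
      _ = (K + log E) ^ (Fintype.card ι - 1) := by
        rw [Finset.prod_const, Finset.card_erase_of_mem (Finset.mem_univ j), Finset.card_univ]
  exact mul_le_mul (setIntegral_cappedInv_Ioc_le hK ha haE) hrest
    (Finset.prod_nonneg fun i _ ↦ hnonneg _) (by positivity)

theorem setIntegral_prod_cappedInv_exists_lt_le (hK : 1 ≤ K) {a E : ℝ} (ha : 0 < a)
    (haE : a ≤ E) (hE : 1 ≤ E) :
    ∫ u in {u : ι → ℝ | (∀ i, u i ∈ Icc 0 E) ∧ ∃ j, a < u j},
        ∏ i, cappedInv K (u i) ≤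
      Fintype.card ι * (K * E / a * (K + log E) ^ (Fintype.card ι - 1)) := by
  have hint : ∀ j : ι, IntegrableOn (fun u ↦ ∏ i, cappedInv K (u i))
      (univ.pi (Function.update (fun _ ↦ Icc 0 E) j (Ioc a E))) volume := fun j ↦
    integrableOn_univ_pi_prod fun i ↦ integrableOn_cappedInv hK <| by
      rw [Function.update_apply]; split_ifs <;> simp
  calc _ ≤ ∑ j, ∫ u in univ.pi (Function.update (fun _ ↦ Icc 0 E) j (Ioc a E)),
          ∏ i, cappedInv K (u i) :=
        setIntegral_le_sum_of_subset_iUnion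
          (fun u ↦ Finset.prod_nonneg fun i _ ↦ cappedInv_nonneg (by linarith) (u i))
          subset_iUnion_pi_update_Ioc hint
    _ ≤ ∑ _j : ι, K * E / a * (K + log E) ^ (Fintype.card ι - 1) :=
        Finset.sum_le_sum fun j _ ↦ setIntegral_pi_update_prod_cappedInv_le hK ha haE hE j
    _ = _ := by rw [Finset.sum_const, Finset.card_univ, nsmul_eq_mul]

end Cube

/-- The integral of `∏ (1 - e^{-b uᵢ})/uᵢ` over the part of the cube
`[0, e^{nt}]^m` where some coordinate exceeds `e^{nt}/m` is `O(n^{m-1})`. -/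
theorem complement_integral_bound (b t : ℝ) (hb : 0 < b) (ht : 0 < t) (m : ℕ) (hm : 1 ≤ m) :
    ∃ C : ℝ, ∀ n : ℕ, 1 ≤ n →
      (∫ u in {u : Fin m → ℝ |
          (∀ i, u i ∈ Set.Icc 0 (Real.exp (n * t))) ∧ ∃ j, Real.exp (n * t) / m < u j},
        ∏ i, (1 - Real.exp (-b * u i)) / u i) ≤ C * (n : ℝ) ^ (m - 1) := by
  set K := max b 1
  have hK : 1 ≤ K := le_max_right b 1
  refine ⟨m * (K * m) * (K + t) ^ (m - 1), fun n hn ↦ ?_⟩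
  set E := exp (n * t)
  have hE : 1 ≤ E := one_le_exp (by positivity)
  set S := {u : Fin m → ℝ | (∀ i, u i ∈ Icc 0 E) ∧ ∃ j, E / m < u j}
  have hS : MeasurableSet S := by measurability
  have hint : IntegrableOn (fun u ↦ ∏ i, cappedInv K (u i)) S :=
    (integrableOn_univ_pi_prod fun _ ↦ integrableOn_cappedInv hK (by simp)).mono_set
      fun u hu i _ ↦ hu.1 i
  calc _ ≤ ∫ u in S, ∏ i, cappedInv K (u i) :=
        setIntegral_prod_one_sub_exp_neg_mul_div_le hb.le hS (fun u hu i ↦ (hu.1 i).1) hint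
    _ ≤ m * (K * E / (E / m) * (K + log E) ^ (m - 1)) := by
        simpa only [Fintype.card_fin] using
          setIntegral_prod_cappedInv_exists_lt_le (ι := Fin m) hK (a := E / m) (by positivity)
          (div_le_self (by positivity) (by exact_mod_cast hm)) hE
    _ = m * (K * m) * (K + n * t) ^ (m - 1) := by
        rw [log_exp]
        field_simp
    _ ≤ m * (K * m) * ((K + t) * n) ^ (m - 1) := by
        gcongr
        nlinarith [(show (1 : ℝ) ≤ n by exact_mod_cast hn)]
    _ = m * (K * m) * (K + t) ^ (m - 1) * n ^ (m - 1) := by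
        rw [mul_pow]; ring
end

section
/- For any t > 0 and m ≥ 1, the limit as n → ∞ of n^{-m} times the integral of ∏_{i=1}^m u_i^{-1} over the set { u : ∑ u_i < e^{nt}, u_1 ≥ 1, u_i ≥ n^{-m} for i ≥ 2 } equals t^m. -/
/-!
Put `E = e^{nt}` and let `c = (1, n^{-m}, …, n^{-m})` be the corner of the region. Since all
coordinates are positive, the region lies in the box `[c, (E, …, E)]`, and it contains the box
`[c, (E/(m+1), …, E/(m+1))]`. Over a box the integral of `∏ uᵢ⁻¹` factorises into
`∏ log (bᵢ / cᵢ)`, which for both boxes is `(nt + O(1)) (nt + m log n + O(1))^{m-1} ~ (nt)^m`.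
-/

open MeasureTheory Filter Set Real Function Fintype

section Box

variable {ι : Type*} [Fintype ι]

theorem integrableOn_Icc_prod_inv {a b : ι → ℝ} (ha : ∀ i, 0 < a i) :
    IntegrableOn (fun u : ι → ℝ => ∏ i, (u i)⁻¹) (Icc a b) :=
  ContinuousOn.integrableOn_compact isCompact_Icc <| continuousOn_finsetProd _ fun i _ =>
    (continuous_apply i).continuousOn.inv₀ fun _ hu => ((ha i).trans_le (hu.1 i)).ne'

theorem setIntegral_Icc_prod_inv {a b : ι → ℝ} (ha : ∀ i, 0 < a i) (hab : a ≤ b) :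
    ∫ u in Icc a b, ∏ i, (u i)⁻¹ = ∏ i, log (b i / a i) := by
  rw [← pi_univ_Icc, volume_pi, Measure.restrict_pi_pi,
    integral_fintype_prod_eq_prod (fun _ x => x⁻¹)]
  refine Finset.prod_congr rfl fun i _ => ?_
  rw [integral_Icc_eq_integral_Ioc, ← intervalIntegral.integral_of_le (hab i),
    integral_inv_of_pos (ha i) ((ha i).trans_le (hab i))]

theorem Icc_subset_setOf_sum_lt {c : ι → ℝ} {E : ℝ} (hE : 0 < E) :
    Icc c (fun _ => E / (card ι + 1)) ⊆ {u | ∑ i, u i < E ∧ c ≤ u} := by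
  refine fun u hu => ⟨?_, hu.1⟩
  calc ∑ i, u i ≤ ∑ _i : ι, E / (card ι + 1) := Finset.sum_le_sum fun i _ => hu.2 i
    _ = card ι / (card ι + 1) * E := by simp [Finset.card_univ]; ring
    _ < 1 * E := by gcongr; rw [div_lt_one (by positivity)]; linarith
    _ = E := one_mul E

theorem setOf_sum_lt_subset_Icc {c : ι → ℝ} (hc : 0 ≤ c) (E : ℝ) :
    {u | ∑ i, u i < E ∧ c ≤ u} ⊆ Icc c (fun _ => E) := fun _ ⟨hsum, hcu⟩ =>
  ⟨hcu, fun i => (Finset.single_le_sum (fun j _ => (hc j).trans (hcu j)) (Finset.mem_univ i)).trans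
    hsum.le⟩

theorem setIntegral_prod_inv_mono_set {c b : ι → ℝ} (hc : ∀ i, 0 < c i) {s t : Set (ι → ℝ)}
    (hst : s ⊆ t) (ht : t ⊆ Icc c b) :
    ∫ u in s, ∏ i, (u i)⁻¹ ≤ ∫ u in t, ∏ i, (u i)⁻¹ :=
  setIntegral_mono_set ((integrableOn_Icc_prod_inv hc).mono_set ht)
    (ae_restrict_of_ae_restrict_of_subset ht <| ae_restrict_of_forall_mem measurableSet_Icc
      fun _ hu => Finset.prod_nonneg fun i _ => inv_nonneg.2 ((hc i).trans_le (hu.1 i)).le)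
    hst.eventuallyLE

theorem prod_log_le_setIntegral_prod_inv {c : ι → ℝ} (hc : ∀ i, 0 < c i) {E : ℝ} (hE : 0 < E)
    (hcE : c ≤ fun _ => E / (card ι + 1)) :
    ∏ i, log (E / (card ι + 1) / c i) ≤ ∫ u in {u | ∑ i, u i < E ∧ c ≤ u}, ∏ i, (u i)⁻¹ := by
  rw [← setIntegral_Icc_prod_inv hc hcE]
  exact setIntegral_prod_inv_mono_set hc (Icc_subset_setOf_sum_lt hE)
    (setOf_sum_lt_subset_Icc (fun i => (hc i).le) E)

theorem setIntegral_prod_inv_le_prod_log {c : ι → ℝ} (hc : ∀ i, 0 < c i) {E : ℝ}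
    (hcE : c ≤ fun _ => E) :
    ∫ u in {u | ∑ i, u i < E ∧ c ≤ u}, ∏ i, (u i)⁻¹ ≤ ∏ i, log (E / c i) := by
  rw [← setIntegral_Icc_prod_inv hc hcE]
  exact setIntegral_prod_inv_mono_set hc (setOf_sum_lt_subset_Icc (fun i => (hc i).le) E)
    subset_rfl

end Box

theorem prod_update_const {ι α M : Type*} [Fintype ι] [DecidableEq ι] [CommMonoid M] (g : α → M)
    (i₀ : ι) (a b : α) : ∏ i, g (update (fun _ => a) i₀ b i) = g b * g a ^ (card ι - 1) := by
  simp_rw [apply_update (fun _ => g)]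
  rw [Finset.prod_update_of_mem (Finset.mem_univ i₀), Finset.prod_const, Finset.card_sdiff]
  simp

theorem update_const_pos {ι : Type*} [DecidableEq ι] (i₀ : ι) {a : ℝ} (ha : 0 < a) (i : ι) :
    0 < update (fun _ => a) i₀ 1 i := by
  by_cases h : i = i₀ <;> simp [h, ha]

theorem setOf_sum_lt_and_update_le {ι : Type*} [Fintype ι] [DecidableEq ι] (i₀ : ι)
    (a b E : ℝ) :
    {u : ι → ℝ | ∑ i, u i < E ∧ update (fun _ => a) i₀ b ≤ u} =
      {u | ∑ i, u i < E ∧ b ≤ u i₀ ∧ ∀ i, i ≠ i₀ → a ≤ u i} := by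
  simp only [update_le_iff]

section Corner

variable {ι : Type*} [Fintype ι] [DecidableEq ι] (i₀ : ι) {a E : ℝ}

theorem log_mul_pow_le_setIntegral_prod_inv (ha : 0 < a) (ha₁ : a ≤ 1)
    (hE : 1 ≤ E / (card ι + 1)) :
    log (E / (card ι + 1)) * (log (E / (card ι + 1)) - log a) ^ (card ι - 1) ≤
      ∫ u in {u : ι → ℝ | ∑ i, u i < E ∧ 1 ≤ u i₀ ∧ ∀ i, i ≠ i₀ → a ≤ u i}, ∏ i, (u i)⁻¹ := by
  have hE₀ : 0 < E := (div_pos_iff_of_pos_right (by positivity)).1 (one_pos.trans_le hE)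
  have := prod_log_le_setIntegral_prod_inv (update_const_pos i₀ ha) hE₀
    (update_le_iff.2 ⟨hE, fun _ _ => ha₁.trans hE⟩)
  rwa [prod_update_const (fun x => log (E / (card ι + 1) / x)), div_one,
    log_div (by positivity) ha.ne', setOf_sum_lt_and_update_le] at this

theorem setIntegral_prod_inv_le_log_mul_pow (ha : 0 < a) (ha₁ : a ≤ 1) (hE : 1 ≤ E) :
    ∫ u in {u : ι → ℝ | ∑ i, u i < E ∧ 1 ≤ u i₀ ∧ ∀ i, i ≠ i₀ → a ≤ u i}, ∏ i, (u i)⁻¹ ≤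
      log E * (log E - log a) ^ (card ι - 1) := by
  have := setIntegral_prod_inv_le_prod_log (update_const_pos i₀ ha)
    (update_le_iff.2 ⟨hE, fun _ _ => ha₁.trans hE⟩)
  rwa [prod_update_const (fun x => log (E / x)), div_one,
    log_div (by positivity) ha.ne', setOf_sum_lt_and_update_le] at this

end Corner

theorem tendsto_mul_add_log_pow (t c d : ℝ) {m : ℕ} (hm : 1 ≤ m) :
    Tendsto (fun n : ℕ => (n : ℝ) ^ (-(m : ℤ)) *
      ((n * t + d) * (n * t + d + c * log n) ^ (m - 1))) atTop (nhds (t ^ m)) := by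
  obtain ⟨k, rfl⟩ : ∃ k, m = k + 1 := ⟨m - 1, (Nat.sub_add_cancel hm).symm⟩
  have hinv : Tendsto (fun n : ℕ => (n : ℝ)⁻¹) atTop (nhds 0) :=
    tendsto_inv_atTop_zero.comp tendsto_natCast_atTop_atTop
  have hlog : Tendsto (fun n : ℕ => log n / n) atTop (nhds 0) :=
    isLittleO_log_id_atTop.tendsto_div_nhds_zero.comp tendsto_natCast_atTop_atTop
  have h₁ : Tendsto (fun n : ℕ => t + d * (n : ℝ)⁻¹) atTop (nhds t) := by
    simpa using (hinv.const_mul d).const_add t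
  have h₂ : Tendsto (fun n : ℕ => t + d * (n : ℝ)⁻¹ + c * (log n / n)) atTop (nhds t) := by
    simpa using h₁.add (hlog.const_mul c)
  rw [pow_succ']
  refine (h₁.mul (h₂.pow k)).congr' ?_
  filter_upwards [eventually_ne_atTop 0] with n hn
  have hn : (n : ℝ) ≠ 0 := Nat.cast_ne_zero.2 hn
  have hx : t + d * (n : ℝ)⁻¹ = (n * t + d) / n := by field_simp
  have hy : t + d * (n : ℝ)⁻¹ + c * (log n / n) = (n * t + d + c * log n) / n := by field_simp
  rw [hy, hx, div_pow, Nat.add_sub_cancel, zpow_neg, zpow_natCast]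
  field_simp
  ring

/-- `n^{-m} ∫_{O_m(n)} ∏ uᵢ⁻¹ du → t^m` where
`O_m(n) = {u : ∑ uᵢ < e^{nt}, u₁ ≥ 1, uᵢ ≥ n^{-m} for i ≥ 2}`. -/
theorem inverse_product_integral_limit (t : ℝ) (ht : 0 < t) (m : ℕ) (hm : 1 ≤ m) :
    Tendsto (fun n : ℕ =>
        (n : ℝ) ^ (-(m : ℤ)) *
          ∫ u in {u : Fin m → ℝ | ∑ i, u i < Real.exp (n * t) ∧ 1 ≤ u ⟨0, hm⟩ ∧
              ∀ i : Fin m, i ≠ ⟨0, hm⟩ → (n : ℝ) ^ (-(m : ℤ)) ≤ u i},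
            ∏ i, (u i)⁻¹)
      atTop (nhds (t ^ m)) := by
  have hlog (n : ℕ) : log ((n : ℝ) ^ (-(m : ℤ))) = -(m * log n) := by
    rw [log_zpow]; push_cast; ring
  have hlog_exp (n : ℕ) : log (exp (n * t) / (m + 1)) = n * t + -log (m + 1) := by
    rw [log_div (exp_pos _).ne' (by positivity), log_exp, sub_eq_add_neg]
  have hexp : Tendsto (fun n : ℕ => exp (n * t)) atTop atTop :=
    tendsto_exp_atTop.comp (tendsto_natCast_atTop_atTop.atTop_mul_const ht)
  have hbounds : ∀ᶠ n : ℕ in atTop, 0 < (n : ℝ) ^ (-(m : ℤ)) ∧ (n : ℝ) ^ (-(m : ℤ)) ≤ 1 ∧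
      1 ≤ exp (n * t) / (m + 1) := by
    filter_upwards [eventually_ge_atTop 1, hexp.eventually_ge_atTop (m + 1)] with n hn hE
    exact ⟨zpow_pos (by positivity) _, zpow_le_one_of_nonpos₀ (by exact_mod_cast hn) (by simp),
      (one_le_div (by positivity)).2 hE⟩
  refine tendsto_of_tendsto_of_tendsto_of_le_of_le'
    (tendsto_mul_add_log_pow t m (-log (m + 1)) hm)
    (tendsto_mul_add_log_pow t m 0 hm) ?_ ?_
  · filter_upwards [hbounds] with n ⟨ha, ha₁, hE⟩
    have := log_mul_pow_le_setIntegral_prod_inv (⟨0, hm⟩ : Fin m) ha ha₁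
      (E := exp (n * t)) (by simpa using hE)
    refine mul_le_mul_of_nonneg_left ?_ ha.le
    simpa [hlog, hlog_exp] using this
  · filter_upwards [hbounds] with n ⟨ha, ha₁, hE⟩
    have := setIntegral_prod_inv_le_log_mul_pow (⟨0, hm⟩ : Fin m) ha ha₁
      (E := exp (n * t)) (hE.trans (div_le_self (exp_pos _).le (by simp)))
    refine mul_le_mul_of_nonneg_left ?_ ha.le
    simpa [hlog] using this
end

section
/- Let f be integrable with f̂ its Fourier transform satisfying |f̂(y)| ≤ C min(|y|, 1) and ∫_ℝ |f̂(y)| |y|^{-1} dy < ∞. Then for every n ≥ 1 and t > 0: (1/n) ∫_1^{e^{nt}} ∫_1^{s_2} ∫_{ℝ²} |f̂(y_1 - y_2)| |f̂(y_2)| e^{-|y_2|(s_2 - s_1) - |y_1| s_1} dy ds ≤ c · t for a constant c depending only on f. -/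
/-!
Bounding `‖f̂ (y₁ - y₂)‖ ≤ C` splits the `y`-integral into `(2C / s₁) · Φ (s₂ - s₁)` with
`Φ u = ∫ ‖f̂ y‖ e^{-|y| u} dy`. After exchanging the `s`-integrals,
`∫_{s₁}^∞ Φ (s₂ - s₁) ds₂ = ∫ ‖f̂ y‖ / |y| dy`, and `∫_1^{e^{nt}} 2C / s₁ ds₁ = 2C n t`.
Everything is nonnegative, so the estimate is run on lower Lebesgue integrals, where Tonelli is
unconditional; `ofReal (∫ f) ≤ ∫⁻ ofReal f` transfers it back without any integrability.
-/

open MeasureTheory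

/-- The Fourier transform `f̂(ξ) = ∫ e^{iξx} f(x) dx`. -/
noncomputable def fourierTransform (f : ℝ → ℝ) (ξ : ℝ) : ℂ :=
  ∫ x : ℝ, Complex.exp (Complex.I * ξ * x) * f x

open Set Real
open scoped ENNReal

theorem ofReal_integral_le_lintegral_ofReal {α : Type*} [MeasurableSpace α] {μ : Measure α}
    {f : α → ℝ} (hf : 0 ≤ᵐ[μ] f) :
    ENNReal.ofReal (∫ x, f x ∂μ) ≤ ∫⁻ x, ENNReal.ofReal (f x) ∂μ :=
  calc ENNReal.ofReal (∫ x, f x ∂μ) ≤ ‖∫ x, f x ∂μ‖ₑ := Real.ofReal_le_enorm _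
    _ ≤ ∫⁻ x, ‖f x‖ₑ ∂μ := enorm_integral_le_lintegral_enorm _
    _ = ∫⁻ x, ENNReal.ofReal (f x) ∂μ :=
      lintegral_congr_ae (hf.mono fun _ ↦ Real.enorm_of_nonneg)

theorem ofReal_intervalIntegral_iterated_le {β : Type*} [MeasurableSpace β] {μ : Measure β}
    {K : ℝ → ℝ → β → ℝ} (hK : ∀ s₁ s₂ y, 0 ≤ K s₁ s₂ y) {a b : ℝ} (hab : a ≤ b) :
    ENNReal.ofReal (∫ s₂ in a..b, ∫ s₁ in a..s₂, ∫ y, K s₁ s₂ y ∂μ) ≤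
      ∫⁻ s₂ in Ioc a b, ∫⁻ s₁ in Ioc a s₂, ∫⁻ y, ENNReal.ofReal (K s₁ s₂ y) ∂μ := by
  have inner_nonneg (s₁ s₂ : ℝ) : 0 ≤ ∫ y, K s₁ s₂ y ∂μ := integral_nonneg (hK s₁ s₂)
  rw [intervalIntegral.integral_of_le hab]
  refine (ofReal_integral_le_lintegral_ofReal ((ae_restrict_iff' measurableSet_Ioc).2
    (ae_of_all _ fun s₂ hs₂ ↦ ?_))).trans
    (setLIntegral_mono' measurableSet_Ioc fun s₂ hs₂ ↦ ?_)
  · exact intervalIntegral.integral_nonneg hs₂.1.le fun s₁ _ ↦ inner_nonneg s₁ s₂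
  · rw [intervalIntegral.integral_of_le hs₂.1.le]
    exact (ofReal_integral_le_lintegral_ofReal (ae_of_all _ fun s₁ ↦ inner_nonneg s₁ s₂)).trans
      (lintegral_mono fun s₁ ↦ ofReal_integral_le_lintegral_ofReal (ae_of_all _ (hK s₁ s₂)))

theorem lintegral_Ioc_inv {a b : ℝ} (ha : 0 < a) (hab : a ≤ b) :
    ∫⁻ s in Ioc a b, ENNReal.ofReal s⁻¹ = ENNReal.ofReal (log (b / a)) := by
  have hint : IntegrableOn (fun s : ℝ ↦ s⁻¹) (Ioc a b) :=
    (intervalIntegrable_iff_integrableOn_Ioc_of_le hab).1 <|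
      intervalIntegral.intervalIntegrable_inv
        (fun s hs ↦ by rw [uIcc_of_le hab] at hs; exact (ha.trans_le hs.1).ne') continuousOn_id
  have hnonneg : 0 ≤ᵐ[volume.restrict (Ioc a b)] fun s : ℝ ↦ s⁻¹ :=
    (ae_restrict_iff' measurableSet_Ioc).2 (ae_of_all _ fun s hs ↦ inv_nonneg.2 (ha.trans hs.1).le)
  rw [← integral_inv_of_pos ha (ha.trans_le hab), intervalIntegral.integral_of_le hab,
    ofReal_integral_eq_lintegral_ofReal hint hnonneg]

theorem lintegral_Ici_exp_neg_mul {a : ℝ} (ha : 0 < a) :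
    ∫⁻ u in Ici 0, ENNReal.ofReal (exp (-(a * u))) = ENNReal.ofReal a⁻¹ := by
  have hint : IntegrableOn (fun u ↦ exp (-(a * u))) (Ioi 0) := by
    simpa only [neg_mul] using exp_neg_integrableOn_Ioi 0 ha
  rw [Measure.restrict_congr_set Ioi_ae_eq_Ici.symm,
    ← ofReal_integral_eq_lintegral_ofReal hint (ae_of_all _ fun _ ↦ (exp_pos _).le),
    integral_comp_mul_left_Ioi (fun u ↦ exp (-u)) 0 ha, integral_exp_neg_Ioi, mul_zero, neg_zero,
    exp_zero, smul_eq_mul, mul_one]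

theorem lintegral_exp_neg_abs_mul {a : ℝ} (ha : 0 < a) :
    ∫⁻ y, ENNReal.ofReal (exp (-(|y| * a))) = ENNReal.ofReal (2 * a⁻¹) := by
  have hval : ∫ y, exp (-(|y| * a)) = 2 * a⁻¹ := by
    rw [integral_comp_abs (f := fun y ↦ exp (-(y * a))),
      integral_comp_mul_right_Ioi (fun u ↦ exp (-u)) 0 ha, integral_exp_neg_Ioi]
    simp
  rw [← ofReal_integral_eq_lintegral_ofReal
    (Integrable.of_integral_ne_zero (by rw [hval]; positivity))
    (ae_of_all _ fun _ ↦ (exp_pos _).le), hval]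

theorem lintegral_triangle_mul_sub_le {w φ : ℝ → ℝ≥0∞} (hw : Measurable w) (hφ : Measurable φ)
    (a b : ℝ) :
    ∫⁻ s₂ in Ioc a b, ∫⁻ s₁ in Ioc a s₂, w s₁ * φ (s₂ - s₁) ≤
      (∫⁻ s in Ioc a b, w s) * ∫⁻ u in Ici 0, φ u := by
  set ψ := (Ici (0 : ℝ)).indicator φ
  have hψ : Measurable ψ := hφ.indicator measurableSet_Ici
  calc ∫⁻ s₂ in Ioc a b, ∫⁻ s₁ in Ioc a s₂, w s₁ * φ (s₂ - s₁)
      ≤ ∫⁻ s₂ in Ioc a b, ∫⁻ s₁ in Ioc a b, w s₁ * ψ (s₂ - s₁) := by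
        refine setLIntegral_mono' measurableSet_Ioc fun s₂ hs₂ ↦ ?_
        calc ∫⁻ s₁ in Ioc a s₂, w s₁ * φ (s₂ - s₁)
            = ∫⁻ s₁ in Ioc a s₂, w s₁ * ψ (s₂ - s₁) :=
              setLIntegral_congr_fun measurableSet_Ioc fun s₁ hs₁ ↦ by
                rw [show ψ (s₂ - s₁) = φ (s₂ - s₁) from indicator_of_mem (sub_nonneg.2 hs₁.2) φ]
          _ ≤ _ := lintegral_mono_set (Ioc_subset_Ioc_right hs₂.2)
    _ = ∫⁻ s₁ in Ioc a b, w s₁ * ∫⁻ s₂ in Ioc a b, ψ (s₂ - s₁) := by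
        rw [lintegral_lintegral_swap ((hw.comp measurable_snd).mul
          (hψ.comp (measurable_fst.sub measurable_snd))).aemeasurable]
        exact lintegral_congr fun s₁ ↦ lintegral_const_mul _ (hψ.comp (measurable_sub_const s₁))
    _ ≤ ∫⁻ s₁ in Ioc a b, w s₁ * ∫⁻ u in Ici 0, φ u := by
        refine lintegral_mono fun s₁ ↦ mul_le_mul_right ?_ _
        calc ∫⁻ s₂ in Ioc a b, ψ (s₂ - s₁) ≤ ∫⁻ s₂, ψ (s₂ - s₁) :=
              setLIntegral_le_lintegral (Ioc a b) _
          _ = ∫⁻ u in Ici 0, φ u := by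
            rw [lintegral_sub_right_eq_self ψ s₁, lintegral_indicator measurableSet_Ici]
    _ = (∫⁻ s in Ioc a b, w s) * ∫⁻ u in Ici 0, φ u := lintegral_mul_const _ hw

noncomputable def dampedMass (g : ℝ → ℝ) (u : ℝ) : ℝ≥0∞ :=
  ∫⁻ y, ENNReal.ofReal (g y * exp (-(|y| * u)))

theorem measurable_dampedMass {g : ℝ → ℝ} (hg : Measurable g) : Measurable (dampedMass g) :=
  Measurable.lintegral_prod_right'
    (f := fun p : ℝ × ℝ ↦ ENNReal.ofReal (g p.2 * exp (-(|p.2| * p.1)))) (by fun_prop)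

theorem lintegral_Ici_dampedMass {g : ℝ → ℝ} (hg : Measurable g) (hg₀ : ∀ y, 0 ≤ g y) :
    ∫⁻ u in Ici 0, dampedMass g u = ∫⁻ y, ENNReal.ofReal (g y / |y|) := by
  simp only [dampedMass]
  rw [lintegral_lintegral_swap (Measurable.ennreal_ofReal (by fun_prop)).aemeasurable]
  refine lintegral_congr_ae ((Measure.ae_ne volume 0).mono fun y hy ↦ ?_)
  simp_rw [ENNReal.ofReal_mul (hg₀ y)]
  rw [lintegral_const_mul _ (by fun_prop), lintegral_Ici_exp_neg_mul (abs_pos.2 hy),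
    ← ENNReal.ofReal_mul (hg₀ y), div_eq_mul_inv]

theorem lintegral_kernel_le_dampedMass {g : ℝ → ℝ} (hg : Measurable g) (hg₀ : ∀ y, 0 ≤ g y)
    {C : ℝ} (hgC : ∀ y, g y ≤ C) {s₁ : ℝ} (hs₁ : 0 < s₁) (s₂ : ℝ) :
    ∫⁻ y : ℝ × ℝ, ENNReal.ofReal
        (g (y.1 - y.2) * g y.2 * exp (-(|y.2| * (s₂ - s₁)) - |y.1| * s₁)) ≤
      ENNReal.ofReal (2 * C) * (ENNReal.ofReal s₁⁻¹ * dampedMass g (s₂ - s₁)) := by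
  have hC : 0 ≤ C := (hg₀ 0).trans (hgC 0)
  have pointwise (y : ℝ × ℝ) :
      g (y.1 - y.2) * g y.2 * exp (-(|y.2| * (s₂ - s₁)) - |y.1| * s₁) ≤
        C * exp (-(|y.1| * s₁)) * (g y.2 * exp (-(|y.2| * (s₂ - s₁)))) := by
    rw [show -(|y.2| * (s₂ - s₁)) - |y.1| * s₁ = -(|y.2| * (s₂ - s₁)) + -(|y.1| * s₁) by ring,
      exp_add]
    have hX : 0 ≤ g y.2 * exp (-(|y.2| * (s₂ - s₁))) * exp (-(|y.1| * s₁)) := by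
      have := hg₀ y.2; positivity
    linarith [mul_le_mul_of_nonneg_right (hgC (y.1 - y.2)) hX]
  calc _ ≤ ∫⁻ y : ℝ × ℝ, ENNReal.ofReal (C * exp (-(|y.1| * s₁))) *
        ENNReal.ofReal (g y.2 * exp (-(|y.2| * (s₂ - s₁)))) := by
        refine lintegral_mono fun y ↦ ?_
        rw [← ENNReal.ofReal_mul (by positivity)]
        exact ENNReal.ofReal_le_ofReal (pointwise y)
    _ = (∫⁻ y₁, ENNReal.ofReal (C * exp (-(|y₁| * s₁)))) * dampedMass g (s₂ - s₁) := by
        rw [Measure.volume_eq_prod]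
        exact lintegral_prod_mul (f := fun y₁ ↦ ENNReal.ofReal (C * exp (-(|y₁| * s₁))))
          (g := fun y₂ ↦ ENNReal.ofReal (g y₂ * exp (-(|y₂| * (s₂ - s₁)))))
          (by fun_prop) (by fun_prop)
    _ = ENNReal.ofReal (2 * C) * (ENNReal.ofReal s₁⁻¹ * dampedMass g (s₂ - s₁)) := by
        simp_rw [ENNReal.ofReal_mul hC]
        rw [lintegral_const_mul _ (by fun_prop), lintegral_exp_neg_abs_mul hs₁,
          ENNReal.ofReal_mul zero_le_two, ENNReal.ofReal_mul zero_le_two]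
        ring

theorem ofReal_iteratedIntegral_kernel_le {g : ℝ → ℝ} (hg : Measurable g)
    (hg₀ : ∀ y, 0 ≤ g y) {C : ℝ} (hgC : ∀ y, g y ≤ C) {a b : ℝ} (ha : 0 < a) (hab : a ≤ b) :
    ENNReal.ofReal (∫ s₂ in a..b, ∫ s₁ in a..s₂, ∫ y : ℝ × ℝ,
        g (y.1 - y.2) * g y.2 * exp (-(|y.2| * (s₂ - s₁)) - |y.1| * s₁)) ≤
      ENNReal.ofReal (2 * C) *
        (ENNReal.ofReal (log (b / a)) * ∫⁻ y, ENNReal.ofReal (g y / |y|)) :=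
  calc _ ≤ ∫⁻ s₂ in Ioc a b, ∫⁻ s₁ in Ioc a s₂, ∫⁻ y : ℝ × ℝ, ENNReal.ofReal
        (g (y.1 - y.2) * g y.2 * exp (-(|y.2| * (s₂ - s₁)) - |y.1| * s₁)) :=
        ofReal_intervalIntegral_iterated_le
          (fun _ _ y ↦ by have := hg₀ y.2; have := hg₀ (y.1 - y.2); positivity) hab
    _ ≤ ∫⁻ s₂ in Ioc a b, ∫⁻ s₁ in Ioc a s₂,
        ENNReal.ofReal (2 * C) * (ENNReal.ofReal s₁⁻¹ * dampedMass g (s₂ - s₁)) :=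
        setLIntegral_mono' measurableSet_Ioc fun s₂ _ ↦ setLIntegral_mono' measurableSet_Ioc
          fun s₁ hs₁ ↦ lintegral_kernel_le_dampedMass hg hg₀ hgC (ha.trans hs₁.1) s₂
    _ = ENNReal.ofReal (2 * C) * ∫⁻ s₂ in Ioc a b, ∫⁻ s₁ in Ioc a s₂,
        ENNReal.ofReal s₁⁻¹ * dampedMass g (s₂ - s₁) := by
        simp_rw [lintegral_const_mul' _ _ ENNReal.ofReal_ne_top]
    _ ≤ ENNReal.ofReal (2 * C) * ((∫⁻ s in Ioc a b, ENNReal.ofReal s⁻¹) *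
        ∫⁻ u in Ici 0, dampedMass g u) := by
        gcongr
        exact lintegral_triangle_mul_sub_le measurable_inv.ennreal_ofReal
          (measurable_dampedMass hg) a b
    _ = _ := by rw [lintegral_Ioc_inv ha hab, lintegral_Ici_dampedMass hg hg₀]

theorem continuous_fourierTransform {f : ℝ → ℝ} (hf : Integrable f) :
    Continuous (fourierTransform f) := by
  refine continuous_of_dominated (bound := fun x ↦ |f x|) (fun ξ ↦ ?_) (fun ξ ↦ ?_) hf.abs
    (ae_of_all _ fun x ↦ by fun_prop)
  · exact (Continuous.aestronglyMeasurable (by fun_prop)).mul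
      (Complex.continuous_ofReal.comp_aestronglyMeasurable hf.1)
  · refine ae_of_all _ fun x ↦ ?_
    rw [norm_mul, Complex.norm_real, Real.norm_eq_abs,
      show Complex.I * ξ * x = ((ξ * x : ℝ) : ℂ) * Complex.I by push_cast; ring,
      Complex.norm_exp_ofReal_mul_I, one_mul]

/-- Tightness estimate (Step 1 of Proposition 4.2): the normalized triple integral
is bounded by `c t` with `c` depending only on `f`. -/
theorem tightness_estimate (f : ℝ → ℝ) (hf : Integrable f) (C : ℝ)
    (hF : ∀ y : ℝ, ‖fourierTransform f y‖ ≤ C * min |y| 1)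
    (hint : Integrable (fun y : ℝ => ‖fourierTransform f y‖ / |y|)) :
    ∃ c : ℝ, ∀ n : ℕ, 1 ≤ n → ∀ t : ℝ, 0 < t →
      (1 / (n : ℝ)) * ∫ s2 in (1:ℝ)..Real.exp (n * t), ∫ s1 in (1:ℝ)..s2,
        ∫ y : ℝ × ℝ, ‖fourierTransform f (y.1 - y.2)‖ *
          ‖fourierTransform f y.2‖ *
            Real.exp (-(|y.2| * (s2 - s1)) - |y.1| * s1)
      ≤ c * t := by
  set M := ∫ y, ‖fourierTransform f y‖ / |y|
  have hC : 0 ≤ C := (norm_nonneg _).trans (by simpa using hF 1)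
  have hbound (y : ℝ) : ‖fourierTransform f y‖ ≤ C :=
    (hF y).trans (mul_le_of_le_one_right hC (min_le_right _ _))
  refine ⟨2 * C * M, fun n hn t ht ↦ ?_⟩
  have hnt : 0 < (n : ℝ) * t := mul_pos (by exact_mod_cast hn) ht
  have key := ofReal_iteratedIntegral_kernel_le (continuous_fourierTransform hf).norm.measurable
    (fun _ ↦ norm_nonneg _) hbound one_pos (one_le_exp hnt.le)
  rw [div_one, log_exp,
    ← ofReal_integral_eq_lintegral_ofReal hint (ae_of_all _ fun _ ↦ by positivity),
    ← ENNReal.ofReal_mul hnt.le, ← ENNReal.ofReal_mul (by positivity),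
    ENNReal.ofReal_le_ofReal_iff (by positivity)] at key
  calc _ ≤ 1 / (n : ℝ) * (2 * C * (n * t * M)) := by gcongr
    _ = 2 * C * M * t := by field_simp
end

section
/- For 1 < α ≤ 2, t > 0, and g : ℝ → ℝ nonnegative measurable with ∫_ℝ g(y) |y|^{-α} dy < ∞ and g(y) = O(y²) near 0: lim_{n→∞} n^{1/α} ∫_{(1-ε)nt}^{nt} ∫_ℝ g(y) s^{-1/α} e^{-|y|^α (nt - s)} dy ds lies between t^{-1/α} ∫_ℝ g(y)|y|^{-α} dy and (1-ε)^{-1/α} t^{-1/α} ∫_ℝ g(y)|y|^{-α} dy, for each ε ∈ (0,1); consequently lim_{n→∞} n^{1/α} ∫_0^{nt} ∫_ℝ g(y) s^{-1/α} e^{-|y|^α(nt-s)} dy ds = t^{-1/α} ∫_ℝ g(y) |y|^{-α} dy. -/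
open MeasureTheory Filter Set Real Topology

/-!
With `J r = ∫ g(y) e^{-|y|^α r} dy`, the inner integral is `s^{-1/α} J(nt - s)`, and Tonelli gives
`∫_0^∞ J = ∫ g(y) |y|^{-α} dy`. On the window `s ∈ [(1-ε)nt, nt]` the substitution `u = nt - s`
turns `n^{1/α}` times the integral into `∫_0^{εnt} (t - u/n)^{-1/α} J(u) du`, which tends to
`t^{-1/α} ∫_0^∞ J` by dominated convergence. On `[0, (1-ε)nt]` we bound `J(nt - s) ≤ J(εnt)`;
as `J` is nonincreasing and integrable, `r J(r) → 0`, so this part is `O(n J(εnt)) → 0`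
(here `1/α < 1` is needed for `s^{-1/α}` to be integrable at `0`).
-/

section Laplace

variable {X : Type*} [MeasurableSpace X] {μ : Measure X} {g w : X → ℝ}

noncomputable def laplaceIntegral (μ : Measure X) (g w : X → ℝ) (r : ℝ) : ℝ :=
  ∫ x, g x * exp (-w x * r) ∂μ

lemma integral_mul_const_mul_exp_eq (c r : ℝ) :
    ∫ x, g x * c * exp (-w x * r) ∂μ = c * laplaceIntegral μ g w r := by
  rw [laplaceIntegral, ← integral_const_mul]
  congr 1 with x
  ring

lemma laplaceIntegral_nonneg (hg0 : ∀ x, 0 ≤ g x) (r : ℝ) : 0 ≤ laplaceIntegral μ g w r :=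
  integral_nonneg fun x => mul_nonneg (hg0 x) (exp_pos _).le

lemma measurable_laplaceIntegral [SFinite μ] (hg : Measurable g) (hw : Measurable w) :
    Measurable (laplaceIntegral μ g w) := by
  have : StronglyMeasurable fun p : ℝ × X => g p.2 * exp (-w p.2 * p.1) :=
    (by fun_prop : Measurable fun p : ℝ × X => g p.2 * exp (-w p.2 * p.1)).stronglyMeasurable
  exact this.integral_prod_right'.measurable

section Integrable

variable (hg : Measurable g) (hw : Measurable w) (hg0 : ∀ x, 0 ≤ g x)
  (hw0 : ∀ᵐ x ∂μ, 0 < w x) (hint : Integrable (fun x => g x / w x) μ)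
include hg hw hg0 hw0 hint

lemma integrable_mul_exp_neg_mul {r : ℝ} (hr : 0 < r) :
    Integrable (fun x => g x * exp (-w x * r)) μ := by
  refine (hint.const_mul r⁻¹).mono' (by fun_prop : Measurable _).aestronglyMeasurable ?_
  filter_upwards [hw0] with x hx
  -- `x < exp x` turns the exponential decay into the integrable majorant `g / (w r)`.
  have hexp : exp (-w x * r) ≤ (w x * r)⁻¹ := by
    rw [neg_mul, exp_neg]
    exact inv_anti₀ (by positivity) (by linarith [add_one_le_exp (w x * r)])
  rw [norm_of_nonneg (mul_nonneg (hg0 x) (exp_pos _).le)]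
  calc g x * exp (-w x * r) ≤ g x * (w x * r)⁻¹ := mul_le_mul_of_nonneg_left hexp (hg0 x)
    _ = r⁻¹ * (g x / w x) := by ring

lemma antitoneOn_laplaceIntegral : AntitoneOn (laplaceIntegral μ g w) (Ioi 0) := by
  intro r₁ hr₁ r₂ hr₂ hr
  refine integral_mono_ae (integrable_mul_exp_neg_mul hg hw hg0 hw0 hint hr₂)
    (integrable_mul_exp_neg_mul hg hw hg0 hw0 hint hr₁) ?_
  filter_upwards [hw0] with x hx
  exact mul_le_mul_of_nonneg_left (exp_le_exp.2 (by nlinarith)) (hg0 x)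

lemma integrable_prod_mul_exp_neg_mul [SFinite μ] :
    Integrable (fun p : X × ℝ => g p.1 * exp (-w p.1 * p.2))
      (μ.prod (volume.restrict (Ioi 0))) := by
  rw [integrable_prod_iff (by fun_prop : Measurable _).aestronglyMeasurable]
  refine ⟨?_, hint.congr ?_⟩
  · filter_upwards [hw0] with x hx
    exact (exp_neg_integrableOn_Ioi 0 hx).const_mul (g x)
  · filter_upwards [hw0] with x hx
    simp_rw [norm_of_nonneg (mul_nonneg (hg0 x) (exp_pos _).le)]
    rw [integral_const_mul, integral_exp_mul_Ioi (neg_lt_zero.2 hx)]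
    simp [div_eq_mul_inv]

lemma integrableOn_laplaceIntegral [SFinite μ] : IntegrableOn (laplaceIntegral μ g w) (Ioi 0) :=
  (integrable_prod_mul_exp_neg_mul hg hw hg0 hw0 hint).integral_prod_right

lemma integral_laplaceIntegral [SFinite μ] :
    ∫ r in Ioi 0, laplaceIntegral μ g w r = ∫ x, g x / w x ∂μ := by
  unfold laplaceIntegral
  rw [← integral_integral_swap (f := fun x r => g x * exp (-w x * r))
    (integrable_prod_mul_exp_neg_mul hg hw hg0 hw0 hint)]
  refine integral_congr_ae ?_
  filter_upwards [hw0] with x hx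
  rw [integral_const_mul, integral_exp_mul_Ioi (neg_lt_zero.2 hx)]
  simp [div_eq_mul_inv]

end Integrable

end Laplace

section Convolution

variable {f : ℝ → ℝ}

lemma intervalIntegrable_zero_of_integrableOn_Ioi (hfi : IntegrableOn f (Ioi 0)) {b : ℝ}
    (hb : 0 ≤ b) :
    IntervalIntegrable f volume 0 b :=
  (intervalIntegrable_iff_integrableOn_Ioc_of_le hb).2 (hfi.mono_set Ioc_subset_Ioi_self)

lemma tendsto_mul_of_antitoneOn_of_integrableOn (hf0 : ∀ r, 0 ≤ f r)
    (hanti : AntitoneOn f (Ioi 0)) (hfi : IntegrableOn f (Ioi 0)) :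
    Tendsto (fun r => r * f r) atTop (𝓝 0) := by
  have htail : Tendsto (fun r => ∫ s in r / 2..r, f s) atTop (𝓝 0) := by
    have h := (intervalIntegral_tendsto_integral_Ioi 0 hfi tendsto_id).sub
      (intervalIntegral_tendsto_integral_Ioi 0 hfi (tendsto_id.atTop_div_const two_pos))
    rw [sub_self] at h
    refine h.congr' ?_
    filter_upwards [eventually_ge_atTop 0] with r hr
    exact intervalIntegral.integral_interval_sub_left
      (intervalIntegrable_zero_of_integrableOn_Ioi hfi hr)
      (intervalIntegrable_zero_of_integrableOn_Ioi hfi (by positivity))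
  refine squeeze_zero' ?_ ?_ (by simpa using htail.const_mul 2)
  · filter_upwards [eventually_ge_atTop 0] with r hr
    exact mul_nonneg hr (hf0 r)
  · filter_upwards [eventually_gt_atTop 0] with r hr
    have hmono : ∫ s in r / 2..r, f r ≤ ∫ s in r / 2..r, f s :=
      intervalIntegral.integral_mono_on (by linarith) intervalIntegrable_const
        ((intervalIntegrable_zero_of_integrableOn_Ioi hfi (by positivity)).symm.trans
          (intervalIntegrable_zero_of_integrableOn_Ioi hfi hr.le))
        fun s hs => hanti (show 0 < s by linarith [hs.1]) hr hs.2
    rw [intervalIntegral.integral_const, smul_eq_mul] at hmono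
    linarith

lemma rpow_mul_integral_window_eq (f : ℝ → ℝ) {p ε T : ℝ} (hε0 : 0 ≤ ε) (hε1 : ε ≤ 1)
    (hT : 0 < T) :
    T ^ p * ∫ s in (1 - ε) * T..T, s ^ (-p) * f (T - s) =
      ∫ u in Ioc 0 (ε * T), (1 - u / T) ^ (-p) * f u := by
  have hsub := intervalIntegral.integral_comp_sub_left (a := (1 - ε) * T) (b := T)
    (fun u => (T - u) ^ (-p) * f u) T
  simp only [sub_sub_cancel, sub_self] at hsub
  rw [hsub, show T - (1 - ε) * T = ε * T by ring,
    intervalIntegral.integral_of_le (by positivity), ← integral_const_mul]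
  refine setIntegral_congr_fun measurableSet_Ioc fun u hu => ?_
  have hu1 : 0 ≤ 1 - u / T := by
    rw [sub_nonneg, div_le_one hT]
    nlinarith [hu.2]
  rw [show T - u = T * (1 - u / T) by field_simp, mul_rpow hT.le hu1, rpow_neg hT.le]
  field_simp

lemma tendsto_setIntegral_window (hf : Measurable f) (hf0 : ∀ r, 0 ≤ f r)
    (hfi : IntegrableOn f (Ioi 0)) {p ε : ℝ} (hp : 0 ≤ p) (hε0 : 0 < ε) (hε1 : ε < 1) :
    Tendsto (fun T => ∫ u in Ioc 0 (ε * T), (1 - u / T) ^ (-p) * f u) atTop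
      (𝓝 (∫ u in Ioi 0, f u)) := by
  simp_rw [← integral_indicator measurableSet_Ioc, ← integral_indicator measurableSet_Ioi]
  refine tendsto_integral_filter_of_dominated_convergence
    ((Ioi 0).indicator fun u => (1 - ε) ^ (-p) * f u)
    (.of_forall fun T => ((by fun_prop : Measurable fun u => (1 - u / T) ^ (-p) * f u).indicator
      measurableSet_Ioc).aestronglyMeasurable)
    ?_ (IntegrableOn.integrable_indicator (hfi.const_mul _) measurableSet_Ioi)
    (.of_forall fun u => ?_)
  · filter_upwards [eventually_gt_atTop 0] with T hT
    refine .of_forall fun u => ?_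
    by_cases hu : u ∈ Ioc 0 (ε * T)
    · have hεu : 1 - ε ≤ 1 - u / T := by
        rw [sub_le_sub_iff_left, div_le_iff₀ hT]
        exact hu.2
      rw [indicator_of_mem hu, indicator_of_mem (Ioc_subset_Ioi_self hu),
        norm_of_nonneg (mul_nonneg (rpow_nonneg (by linarith) _) (hf0 u))]
      exact mul_le_mul_of_nonneg_right
        (rpow_le_rpow_of_nonpos (by linarith) hεu (neg_nonpos.2 hp)) (hf0 u)
    · rw [indicator_of_notMem hu, norm_zero]
      exact indicator_nonneg (fun u _ => mul_nonneg (rpow_nonneg (by linarith) _) (hf0 u)) u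
  rcases le_or_gt u 0 with hu | hu
  · simp only [indicator, mem_Ioc, mem_Ioi, hu.not_gt, false_and, if_false]
    exact tendsto_const_nhds
  · have hlim : Tendsto (fun T => (1 - u / T) ^ (-p) * f u) atTop (𝓝 (f u)) := by
      have h1 : Tendsto (fun T : ℝ => 1 - u / T) atTop (𝓝 1) := by
        simpa using (tendsto_const_nhds (x := (1 : ℝ))).sub
          ((tendsto_const_nhds (x := u)).div_atTop tendsto_id)
      simpa using ((continuousAt_rpow_const 1 (-p) (Or.inl one_ne_zero)).tendsto.comp h1).mul_const
        (f u)
    rw [indicator_of_mem (show u ∈ Ioi 0 from hu)]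
    refine hlim.congr' ?_
    filter_upwards [eventually_ge_atTop (u / ε)] with T hT
    rw [indicator_of_mem (show u ∈ Ioc 0 (ε * T) from ⟨hu, (div_le_iff₀' hε0).1 hT⟩)]

lemma tendsto_rpow_mul_integral_window (hf : Measurable f) (hf0 : ∀ r, 0 ≤ f r)
    (hfi : IntegrableOn f (Ioi 0)) {p ε : ℝ} (hp : 0 ≤ p) (hε0 : 0 < ε) (hε1 : ε < 1) :
    Tendsto (fun T => T ^ p * ∫ s in (1 - ε) * T..T, s ^ (-p) * f (T - s)) atTop
      (𝓝 (∫ u in Ioi 0, f u)) := by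
  refine (tendsto_setIntegral_window hf hf0 hfi hp hε0 hε1).congr' ?_
  filter_upwards [eventually_gt_atTop 0] with T hT
  exact (rpow_mul_integral_window_eq f hε0.le hε1.le hT).symm

lemma intervalIntegrable_window (hfi : IntegrableOn f (Ioi 0)) (p : ℝ) {b T : ℝ} (hb : 0 < b)
    (hbT : b ≤ T) : IntervalIntegrable (fun s => s ^ (-p) * f (T - s)) volume b T := by
  have h := (intervalIntegrable_zero_of_integrableOn_Ioi hfi (sub_nonneg.2 hbT)).comp_sub_left T
  simp only [sub_zero, sub_sub_cancel] at h
  refine h.symm.continuousOn_mul fun s hs => ?_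
  have : 0 < s := hb.trans_le (by simpa [hbT] using hs.1)
  exact (continuousAt_rpow_const s (-p) (Or.inl this.ne')).continuousWithinAt

variable (hf : Measurable f) (hf0 : ∀ r, 0 ≤ f r) (hanti : AntitoneOn f (Ioi 0))
include hf hf0 hanti

lemma intervalIntegrable_head {p b T : ℝ} (hp : p < 1) (hb : 0 ≤ b) (hbT : b < T) :
    IntervalIntegrable (fun s => s ^ (-p) * f (T - s)) volume 0 b := by
  rw [intervalIntegrable_iff_integrableOn_Ioc_of_le hb]
  have hrpow := (intervalIntegral.intervalIntegrable_rpow' (a := 0) (b := b) (r := -p)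
    (by linarith)).1
  refine (hrpow.mul_const (f (T - b))).mono' (by fun_prop : Measurable _).aestronglyMeasurable ?_
  filter_upwards [ae_restrict_mem measurableSet_Ioc] with s hs
  rw [norm_of_nonneg (mul_nonneg (rpow_nonneg hs.1.le _) (hf0 _))]
  exact mul_le_mul_of_nonneg_left
    (hanti (sub_pos.2 hbT) (show 0 < T - s by linarith [hs.2]) (by linarith [hs.2]))
    (rpow_nonneg hs.1.le (-p))

lemma integral_head_le {p b T : ℝ} (hp : p < 1) (hb : 0 ≤ b) (hbT : b < T) :
    ∫ s in 0..b, s ^ (-p) * f (T - s) ≤ f (T - b) * (b ^ (1 - p) / (1 - p)) := by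
  have hbound : ∫ s in 0..b, s ^ (-p) * f (T - s) ≤ ∫ s in 0..b, f (T - b) * s ^ (-p) :=
    intervalIntegral.integral_mono_on hb (intervalIntegrable_head hf hf0 hanti hp hb hbT)
      ((intervalIntegral.intervalIntegrable_rpow' (r := -p) (by linarith)).const_mul _)
      fun s hs => by
        rw [mul_comm]
        exact mul_le_mul_of_nonneg_right
          (hanti (sub_pos.2 hbT) (show 0 < T - s by linarith [hs.2]) (by linarith [hs.2]))
          (rpow_nonneg hs.1 _)
  rwa [intervalIntegral.integral_const_mul, integral_rpow (Or.inl (by linarith)),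
    zero_rpow (by linarith), sub_zero, neg_add_eq_sub] at hbound

lemma tendsto_rpow_mul_integral_head (hfi : IntegrableOn f (Ioi 0)) {p ε : ℝ} (hp : p < 1)
    (hε0 : 0 < ε) (hε1 : ε < 1) :
    Tendsto (fun T => T ^ p * ∫ s in 0..(1 - ε) * T, s ^ (-p) * f (T - s)) atTop (𝓝 0) := by
  have hdecay : Tendsto (fun T => (1 - ε) ^ (1 - p) / ((1 - p) * ε) * (ε * T * f (ε * T))) atTop
      (𝓝 0) := by
    simpa using ((tendsto_mul_of_antitoneOn_of_integrableOn hf0 hanti hfi).comp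
      (tendsto_id.const_mul_atTop hε0)).const_mul ((1 - ε) ^ (1 - p) / ((1 - p) * ε))
  refine squeeze_zero' ?_ ?_ hdecay
  · filter_upwards [eventually_ge_atTop 0] with T hT
    exact mul_nonneg (rpow_nonneg hT _) (intervalIntegral.integral_nonneg (by nlinarith)
      fun s hs => mul_nonneg (rpow_nonneg hs.1 _) (hf0 _))
  · filter_upwards [eventually_gt_atTop 0] with T hT
    have hle := integral_head_le hf hf0 hanti hp (b := (1 - ε) * T) (T := T) (by nlinarith)
      (by nlinarith)
    have hTp : T ^ p * T ^ (1 - p) = T := by rw [← rpow_add hT]; simp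
    have hp1 : 1 - p ≠ 0 := by linarith
    calc T ^ p * ∫ s in 0..(1 - ε) * T, s ^ (-p) * f (T - s)
        ≤ T ^ p * (f (T - (1 - ε) * T) * (((1 - ε) * T) ^ (1 - p) / (1 - p))) :=
          mul_le_mul_of_nonneg_left hle (rpow_nonneg hT.le _)
      _ = (T ^ p * T ^ (1 - p)) * ((1 - ε) ^ (1 - p) / (1 - p) * f (ε * T)) := by
          rw [mul_rpow (by linarith) hT.le, show T - (1 - ε) * T = ε * T by ring]
          ring
      _ = (1 - ε) ^ (1 - p) / ((1 - p) * ε) * (ε * T * f (ε * T)) := by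
          rw [hTp]
          field_simp

lemma tendsto_rpow_mul_integral (hfi : IntegrableOn f (Ioi 0)) {p : ℝ} (hp0 : 0 ≤ p)
    (hp1 : p < 1) :
    Tendsto (fun T => T ^ p * ∫ s in 0..T, s ^ (-p) * f (T - s)) atTop
      (𝓝 (∫ u in Ioi 0, f u)) := by
  have hsum := (tendsto_rpow_mul_integral_head hf hf0 hanti hfi hp1 (ε := 1 / 2) (by norm_num)
    (by norm_num)).add (tendsto_rpow_mul_integral_window hf hf0 hfi hp0 (ε := 1 / 2)
    (by norm_num) (by norm_num))
  rw [zero_add] at hsum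
  refine hsum.congr' ?_
  filter_upwards [eventually_gt_atTop 0] with T hT
  rw [← mul_add, intervalIntegral.integral_add_adjacent_intervals
    (intervalIntegrable_head hf hf0 hanti hp1 (by positivity) (by linarith))
    (intervalIntegrable_window hfi p (by positivity) (by linarith))]

end Convolution

lemma tendsto_natCast_rpow_mul_of_tendsto {F : ℝ → ℝ} {p L t : ℝ} (ht : 0 < t)
    (h : Tendsto (fun T => T ^ p * F T) atTop (𝓝 L)) :
    Tendsto (fun n : ℕ => (n : ℝ) ^ p * F (n * t)) atTop (𝓝 (t ^ (-p) * L)) := by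
  refine ((h.comp (tendsto_natCast_atTop_atTop.atTop_mul_const ht)).const_mul (t ^ (-p))).congr
    fun n => ?_
  rw [Function.comp_apply, mul_rpow (Nat.cast_nonneg n) ht.le, rpow_neg ht.le]
  field_simp

lemma ae_abs_rpow_pos (α : ℝ) : ∀ᵐ y : ℝ, 0 < |y| ^ α := by
  filter_upwards [volume.ae_ne 0] with y hy
  exact rpow_pos_of_pos (abs_pos.2 hy) α

lemma div_abs_rpow_eq_mul_abs_rpow_neg (g : ℝ → ℝ) (α : ℝ) :
    (fun y : ℝ => g y / |y| ^ α) = fun y => g y * |y| ^ (-α) := by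
  ext y
  rw [rpow_neg (abs_nonneg y), div_eq_mul_inv]

theorem main_time_window_general (α : ℝ) (hα : α ∈ Set.Ioc (1 : ℝ) 2) (t : ℝ) (ht : 0 < t)
    (g : ℝ → ℝ) (hg : Measurable g) (hpos : ∀ y, 0 ≤ g y)
    (hint : Integrable (fun y : ℝ => g y * |y| ^ (-α))) :
    (∀ ε ∈ Set.Ioo (0 : ℝ) 1,
      t ^ (-(1 / α)) * (∫ y : ℝ, g y * |y| ^ (-α)) ≤
        liminf (fun n : ℕ => (n : ℝ) ^ (1 / α) *
          ∫ s in ((1 - ε) * n * t)..(n * t),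
            ∫ y : ℝ, g y * s ^ (-(1 / α)) * Real.exp (-|y| ^ α * (n * t - s))) atTop ∧
      limsup (fun n : ℕ => (n : ℝ) ^ (1 / α) *
          ∫ s in ((1 - ε) * n * t)..(n * t),
            ∫ y : ℝ, g y * s ^ (-(1 / α)) * Real.exp (-|y| ^ α * (n * t - s))) atTop ≤
        (1 - ε) ^ (-(1 / α)) * t ^ (-(1 / α)) * ∫ y : ℝ, g y * |y| ^ (-α)) ∧
    Tendsto (fun n : ℕ => (n : ℝ) ^ (1 / α) *
        ∫ s in (0:ℝ)..(n * t),
          ∫ y : ℝ, g y * s ^ (-(1 / α)) * Real.exp (-|y| ^ α * (n * t - s)))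
      atTop (nhds (t ^ (-(1 / α)) * ∫ y : ℝ, g y * |y| ^ (-α))) := by
  obtain ⟨hα1, -⟩ := hα
  have hw : Measurable fun y : ℝ => |y| ^ α := by fun_prop
  have hint' : Integrable (fun y : ℝ => g y / |y| ^ α) :=
    div_abs_rpow_eq_mul_abs_rpow_neg g α ▸ hint
  set J := laplaceIntegral volume g fun y : ℝ => |y| ^ α
  have hJ := measurable_laplaceIntegral (μ := volume) hg hw
  have hJ0 := laplaceIntegral_nonneg (μ := volume) (w := fun y : ℝ => |y| ^ α) hpos
  have hanti := antitoneOn_laplaceIntegral hg hw hpos (ae_abs_rpow_pos α) hint'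
  have hJi := integrableOn_laplaceIntegral hg hw hpos (ae_abs_rpow_pos α) hint'
  have hL : ∫ r in Ioi 0, J r = ∫ y, g y * |y| ^ (-α) := by
    rw [integral_laplaceIntegral hg hw hpos (ae_abs_rpow_pos α) hint',
      div_abs_rpow_eq_mul_abs_rpow_neg]
  have hp0 : 0 ≤ 1 / α := one_div_nonneg.2 (by linarith)
  have hp1 : 1 / α < 1 := (div_lt_one (by linarith)).2 hα1
  simp_rw [integral_mul_const_mul_exp_eq]
  refine ⟨fun ε hε => ?_, hL ▸ tendsto_natCast_rpow_mul_of_tendsto ht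
    (tendsto_rpow_mul_integral hJ hJ0 hanti hJi hp0 hp1)⟩
  have hwin : Tendsto (fun n : ℕ => (n : ℝ) ^ (1 / α) *
      ∫ s in (1 - ε) * n * t..n * t, s ^ (-(1 / α)) * J (n * t - s)) atTop
      (𝓝 (t ^ (-(1 / α)) * ∫ y, g y * |y| ^ (-α))) :=
    (hL ▸ tendsto_natCast_rpow_mul_of_tendsto ht
      (tendsto_rpow_mul_integral_window hJ hJ0 hJi hp0 hε.1 hε.2)).congr
      fun n => by rw [mul_assoc (1 - ε)]
  refine ⟨hwin.liminf_eq.ge, hwin.limsup_eq.le.trans ?_⟩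
  rw [mul_assoc]
  exact le_mul_of_one_le_left
    (mul_nonneg (rpow_nonneg ht.le _) (integral_nonneg fun y => mul_nonneg (hpos y)
      (rpow_nonneg (abs_nonneg y) _)))
    (one_le_rpow_of_pos_of_le_one_of_nonpos (by linarith [hε.2]) (by linarith [hε.1])
      (by linarith))

/-- The main time window: for each `ε ∈ (0,1)` the liminf/limsup of
`n^{1/α} ∫_{(1-ε)nt}^{nt} ∫ g(y) s^{-1/α} e^{-|y|^α(nt-s)} dy ds` lie between
`t^{-1/α} ∫ g(y)|y|^{-α} dy` and `(1-ε)^{-1/α} t^{-1/α} ∫ g(y)|y|^{-α} dy`;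
consequently the full integral converges to `t^{-1/α} ∫ g(y)|y|^{-α} dy`. -/
theorem main_time_window (α : ℝ) (hα : α ∈ Set.Ioc (1 : ℝ) 2) (t : ℝ) (ht : 0 < t)
    (g : ℝ → ℝ) (hg : Measurable g) (hpos : ∀ y, 0 ≤ g y)
    (hsq : ∃ C δ : ℝ, 0 < δ ∧ ∀ y : ℝ, |y| ≤ δ → g y ≤ C * y ^ 2)
    (hint : Integrable (fun y : ℝ => g y * |y| ^ (-α))) :
    (∀ ε ∈ Set.Ioo (0 : ℝ) 1,
      t ^ (-(1 / α)) * (∫ y : ℝ, g y * |y| ^ (-α)) ≤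
        liminf (fun n : ℕ => (n : ℝ) ^ (1 / α) *
          ∫ s in ((1 - ε) * n * t)..(n * t),
            ∫ y : ℝ, g y * s ^ (-(1 / α)) * Real.exp (-|y| ^ α * (n * t - s))) atTop ∧
      limsup (fun n : ℕ => (n : ℝ) ^ (1 / α) *
          ∫ s in ((1 - ε) * n * t)..(n * t),
            ∫ y : ℝ, g y * s ^ (-(1 / α)) * Real.exp (-|y| ^ α * (n * t - s))) atTop ≤
        (1 - ε) ^ (-(1 / α)) * t ^ (-(1 / α)) * ∫ y : ℝ, g y * |y| ^ (-α)) ∧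
    Tendsto (fun n : ℕ => (n : ℝ) ^ (1 / α) *
        ∫ s in (0:ℝ)..(n * t),
          ∫ y : ℝ, g y * s ^ (-(1 / α)) * Real.exp (-|y| ^ α * (n * t - s)))
      atTop (nhds (t ^ (-(1 / α)) * ∫ y : ℝ, g y * |y| ^ (-α))) :=
  main_time_window_general α hα t ht g hg hpos hint
end
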